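/- arXiv:2602.15679 — 2 statements merged into one kernel-verified Lean document; each statement's English description precedes it below -/
import Mathlib

section
/- Let E be a real Hilbert space, L a closed linear subspace of E, and C a nonempty closed convex cone in E with L ⊆ C. For θ ∈ E define Δ(θ) = ‖θ − P_L(θ)‖² − ‖θ − P_C(θ)‖². Then Δ(θ) > 0 if and only if θ ∉ (C ∩ L⊥)°, where (C ∩ L⊥)° = {u ∈ E : ⟨u, v⟩ ≤ 0 for all v ∈ C ∩ L⊥} is the polar cone of C ∩ L⊥. (This characterizes the set on which the distance test for Type A problems is consistent.) -/
/-!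
Write `p_L`, `p_C` for the nearest points to `θ`. Since `C` is a convex cone, `θ - p_C` lies in
the polar cone `C°` and is orthogonal to `p_C`; as `L ⊆ C` is a subspace, `θ - p_C` is also
orthogonal to `L`. Hence `Δ(θ) = ‖p_C - p_L‖² ≥ 0`, and `Δ(θ) = 0` exactly when `p_L = p_C`.
If `p_L = p_C`, then `⟪θ, v⟫ = ⟪θ - p_C, v⟫ + ⟪p_L, v⟫ ≤ 0` for `v ∈ C ∩ L⊥`. Conversely, if
`θ ∈ (C ∩ L⊥)°`, split any `c ∈ C` as `l + m` with `l ∈ L` and `m ∈ C ∩ L⊥`: then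
`⟪θ - p_L, c - p_L⟫ = ⟪θ, m⟫ ≤ 0`, so `p_L` is also a nearest point of `C` and `Δ(θ) ≤ 0`.
-/

open RealInnerProductSpace

section NearestPoint

variable {E : Type*} [SeminormedAddCommGroup E] {K : Set E} {x p : E}

def IsNearestPoint (K : Set E) (x p : E) : Prop :=
  p ∈ K ∧ ∀ y ∈ K, ‖x - p‖ ≤ ‖x - y‖

lemma IsNearestPoint.norm_eq_iInf (h : IsNearestPoint K x p) : ‖x - p‖ = ⨅ w : K, ‖x - w‖ := by
  have : Nonempty K := ⟨⟨p, h.1⟩⟩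
  refine le_antisymm (le_ciInf fun w => h.2 w w.2) ?_
  exact ciInf_le (f := fun w : K => ‖x - w‖)
    ⟨0, Set.forall_mem_range.2 fun w => norm_nonneg _⟩ ⟨p, h.1⟩

end NearestPoint

section ConvexCone

variable {E : Type*} [AddCommGroup E] [Module ℝ E]

def IsConvexCone (K : Set E) : Prop :=
  Convex ℝ K ∧ ∀ c ∈ K, ∀ r : ℝ, 0 ≤ r → r • c ∈ K

lemma IsConvexCone.add_mem {K : Set E} (hK : IsConvexCone K) {a b : E} (ha : a ∈ K)
    (hb : b ∈ K) : a + b ∈ K := by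
  have hmid : (1 / 2 : ℝ) • a + (1 / 2 : ℝ) • b ∈ K :=
    hK.1 ha hb (by norm_num) (by norm_num) (by norm_num)
  simpa [smul_add, smul_smul] using hK.2 _ hmid 2 (by norm_num)

end ConvexCone

section Projection

variable {E : Type*} [NormedAddCommGroup E] [InnerProductSpace ℝ E]
  {K : Set E} {L : Submodule ℝ E} {x p : E}

lemma IsNearestPoint.real_inner_sub_le_zero (h : IsNearestPoint K x p) (hK : Convex ℝ K) :
    ∀ y ∈ K, ⟪x - p, y - p⟫ ≤ 0 :=
  (norm_eq_iInf_iff_real_inner_le_zero hK h.1).1 h.norm_eq_iInf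

lemma isNearestPoint_of_real_inner_sub_le_zero (hp : p ∈ K)
    (h : ∀ y ∈ K, ⟪x - p, y - p⟫ ≤ 0) : IsNearestPoint K x p := by
  refine ⟨hp, fun y hy => ?_⟩
  have hexpand : ‖x - y‖ ^ 2 = ‖x - p‖ ^ 2 - 2 * ⟪x - p, y - p⟫ + ‖y - p‖ ^ 2 := by
    rw [← norm_sub_sq_real, sub_sub_sub_cancel_right]
  have hsq : ‖x - p‖ ^ 2 ≤ ‖x - y‖ ^ 2 := by nlinarith [h y hy, sq_nonneg ‖y - p‖]
  exact (sq_le_sq₀ (norm_nonneg _) (norm_nonneg _)).1 hsq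

lemma IsNearestPoint.sub_mem_orthogonal (h : IsNearestPoint L x p) : x - p ∈ Lᗮ :=
  (L.mem_orthogonal' _).2 <| (L.norm_eq_iInf_iff_real_inner_eq_zero h.1).1 h.norm_eq_iInf

lemma IsNearestPoint.real_inner_sub_self_eq_zero (h : IsNearestPoint K x p)
    (hK : IsConvexCone K) : ⟪x - p, p⟫ = 0 := by
  have hvar := h.real_inner_sub_le_zero hK.1
  have h2p : ⟪x - p, (2 : ℝ) • p - p⟫ ≤ 0 := hvar _ (hK.2 p h.1 2 (by norm_num))
  have h0 : ⟪x - p, 0 - p⟫ ≤ 0 := hvar 0 (by simpa using hK.2 p h.1 0 le_rfl)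
  rw [two_smul, add_sub_cancel_right] at h2p
  rw [zero_sub, inner_neg_right] at h0
  linarith

lemma IsNearestPoint.real_inner_sub_le_zero_of_isConvexCone (h : IsNearestPoint K x p)
    (hK : IsConvexCone K) : ∀ y ∈ K, ⟪x - p, y⟫ ≤ 0 := by
  intro y hy
  have := h.real_inner_sub_le_zero hK.1 y hy
  rw [inner_sub_right, h.real_inner_sub_self_eq_zero hK] at this
  linarith

lemma IsNearestPoint.sub_mem_orthogonal_of_le (h : IsNearestPoint K x p) (hK : IsConvexCone K)
    (hLK : (L : Set E) ⊆ K) : x - p ∈ Lᗮ := by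
  refine (L.mem_orthogonal' _).2 fun l hl => le_antisymm ?_ ?_
  · exact h.real_inner_sub_le_zero_of_isConvexCone hK l (hLK hl)
  · have := h.real_inner_sub_le_zero_of_isConvexCone hK (-l) (hLK (L.neg_mem hl))
    rw [inner_neg_right] at this
    linarith

lemma IsNearestPoint.norm_sub_sq_eq_add_of_le {pL : E} (hL : IsNearestPoint L x pL)
    (h : IsNearestPoint K x p) (hK : IsConvexCone K) (hLK : (L : Set E) ⊆ K) :
    ‖x - pL‖ ^ 2 = ‖x - p‖ ^ 2 + ‖p - pL‖ ^ 2 := by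
  have horth : ⟪x - p, p - pL⟫ = 0 := by
    rw [inner_sub_right, h.real_inner_sub_self_eq_zero hK,
      L.inner_left_of_mem_orthogonal hL.1 (h.sub_mem_orthogonal_of_le hK hLK), sub_zero]
  rw [← sub_add_sub_cancel x p pL, norm_add_sq_real, horth]
  ring

lemma IsNearestPoint.real_inner_le_zero_of_mem (h : IsNearestPoint K x p) (hK : IsConvexCone K)
    (hp : p ∈ L) : ∀ v ∈ K ∩ (Lᗮ : Set E), ⟪x, v⟫ ≤ 0 := by
  rintro v ⟨hvK, hvL⟩
  have hres := h.real_inner_sub_le_zero_of_isConvexCone hK v hvK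
  rwa [inner_sub_left, L.inner_right_of_mem_orthogonal hp hvL, sub_zero] at hres

lemma IsNearestPoint.of_le_of_real_inner_le_zero [L.HasOrthogonalProjection]
    (h : IsNearestPoint L x p) (hK : IsConvexCone K) (hLK : (L : Set E) ⊆ K)
    (hx : ∀ v ∈ K ∩ (Lᗮ : Set E), ⟪x, v⟫ ≤ 0) : IsNearestPoint K x p := by
  refine isNearestPoint_of_real_inner_sub_le_zero (hLK h.1) fun c hc => ?_
  obtain ⟨l, hl, hcl⟩ := Submodule.HasOrthogonalProjection.exists_orthogonal (K := L) c
  have hclK : c - l ∈ K := by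
    rw [sub_eq_add_neg]
    exact hK.add_mem hc (hLK (L.neg_mem hl))
  have hlp : ⟪x - p, l - p⟫ = 0 :=
    L.inner_left_of_mem_orthogonal (L.sub_mem hl h.1) h.sub_mem_orthogonal
  have hpcl : ⟪p, c - l⟫ = 0 := L.inner_right_of_mem_orthogonal h.1 hcl
  calc ⟪x - p, c - p⟫ = ⟪x - p, l - p⟫ + ⟪x - p, c - l⟫ := by
        rw [← inner_add_right, sub_add_sub_cancel']
    _ = ⟪x, c - l⟫ := by rw [hlp, inner_sub_left, hpcl]; ring
    _ ≤ 0 := hx _ ⟨hclK, hcl⟩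

end Projection

theorem stmt3_general {E : Type*} [NormedAddCommGroup E] [InnerProductSpace ℝ E]
    (L : Submodule ℝ E)
    (C : Set E) (hCconv : Convex ℝ C)
    (hCcone : ∀ c ∈ C, ∀ r : ℝ, 0 ≤ r → r • c ∈ C)
    (hLC : (L : Set E) ⊆ C)
    (PL PC : E → E)
    (hPL : ∀ x : E, PL x ∈ L ∧ ∀ y ∈ (L : Set E), ‖x - PL x‖ ≤ ‖x - y‖)
    (hPC : ∀ x : E, PC x ∈ C ∧ ∀ y ∈ C, ‖x - PC x‖ ≤ ‖x - y‖) :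
    ∀ θ : E, (0 < ‖θ - PL θ‖ ^ 2 - ‖θ - PC θ‖ ^ 2 ↔
      θ ∉ {u : E | ∀ v ∈ C ∩ (Lᗮ : Set E), (inner ℝ u v : ℝ) ≤ 0}) := by
  have : L.HasOrthogonalProjection :=
    ⟨fun v => ⟨PL v, (hPL v).1, IsNearestPoint.sub_mem_orthogonal (hPL v)⟩⟩
  have hK : IsConvexCone C := ⟨hCconv, hCcone⟩
  intro θ
  have hL : IsNearestPoint L θ (PL θ) := hPL θ
  have hC : IsNearestPoint C θ (PC θ) := hPC θ
  have hpyth := hL.norm_sub_sq_eq_add_of_le hC hK hLC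
  constructor
  · intro hpos hpolar
    have hle : ‖θ - PL θ‖ ≤ ‖θ - PC θ‖ :=
      (hL.of_le_of_real_inner_le_zero hK hLC hpolar).2 _ hC.1
    nlinarith [norm_nonneg (θ - PL θ)]
  · intro hnot
    by_contra hle
    have heq : PC θ = PL θ := by
      rw [← sub_eq_zero, ← norm_eq_zero]
      nlinarith [norm_nonneg (PC θ - PL θ)]
    exact hnot (hC.real_inner_le_zero_of_mem hK (heq ▸ hL.1))

/-- Let E be a real Hilbert space, L a closed linear subspace, C a nonempty
closed convex cone with L ⊆ C. For θ ∈ E define Δ(θ) = ‖θ − P_L(θ)‖² − ‖θ − P_C(θ)‖².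
Then Δ(θ) > 0 if and only if θ ∉ (C ∩ L⊥)°, where (C ∩ L⊥)° is the polar cone
{u : ⟨u, v⟩ ≤ 0 for all v ∈ C ∩ L⊥}. -/
theorem stmt3 {E : Type*} [NormedAddCommGroup E] [InnerProductSpace ℝ E] [CompleteSpace E]
    (L : Submodule ℝ E) (hLclosed : IsClosed (L : Set E))
    (C : Set E) (hCne : C.Nonempty) (hCclosed : IsClosed C) (hCconv : Convex ℝ C)
    (hCcone : ∀ c ∈ C, ∀ r : ℝ, 0 ≤ r → r • c ∈ C)
    (hLC : (L : Set E) ⊆ C)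
    (PL PC : E → E)
    (hPL : ∀ x : E, PL x ∈ L ∧ ∀ y ∈ (L : Set E), ‖x - PL x‖ ≤ ‖x - y‖)
    (hPC : ∀ x : E, PC x ∈ C ∧ ∀ y ∈ C, ‖x - PC x‖ ≤ ‖x - y‖) :
    ∀ θ : E, (0 < ‖θ - PL θ‖ ^ 2 - ‖θ - PC θ‖ ^ 2 ↔
      θ ∉ {u : E | ∀ v ∈ C ∩ (Lᗮ : Set E), (inner ℝ u v : ℝ) ≤ 0}) :=
  stmt3_general L C hCconv hCcone hLC PL PC hPL hPC
end

section
/- Let E be a real Hilbert space, L a closed linear subspace of E, and C a nonempty closed convex cone in E with L ⊆ C, and let r > 0. Then {x ∈ E : ‖x − P_L(x)‖² − ‖x − P_C(x)‖² < r²} = (C ∩ L⊥)° ⊕ Ball(0, r), where (C ∩ L⊥)° = {u ∈ E : ⟨u, v⟩ ≤ 0 for all v ∈ C ∩ L⊥} is the polar cone of C ∩ L⊥. (This identifies the acceptance region of the distance test for Type A problems.) -/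
/-!
With p = P_L x and q = P_C x, Moreau's characterisation of the projection onto a cone gives
x - q ∈ C°, ⟪x - q, q⟫ = 0, and (since L ⊆ C is a subspace) x - q ⊥ L. Hence k = q - p lies in
K = C ∩ L⊥, x - k ∈ K°, ⟪x - k, k⟫ = 0, and Pythagoras gives
‖x - p‖² - ‖x - q‖² = ‖k‖². Such a Moreau decomposition x = (x - k) + k makes ‖k‖ the distance
from x to K°: for s ∈ K°, ‖k‖² ≤ ⟪x - s, k⟫ ≤ ‖x - s‖ ‖k‖.
-/

open Pointwise Metric RealInnerProductSpace

section PolarCone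

variable {E : Type*} [NormedAddCommGroup E] [InnerProductSpace ℝ E]

def polarCone (K : Set E) : Set E := {u | ∀ v ∈ K, ⟪u, v⟫ ≤ 0}

theorem real_inner_sub_le_zero_of_forall_norm_le {K : Set E} (hK : Convex ℝ K) {x q : E}
    (hq : q ∈ K) (hmin : ∀ y ∈ K, ‖x - q‖ ≤ ‖x - y‖) : ∀ w ∈ K, ⟪x - q, w - q⟫ ≤ 0 := by
  have : Nonempty K := ⟨⟨q, hq⟩⟩
  refine (norm_eq_iInf_iff_real_inner_le_zero hK hq).mp
    (le_antisymm (le_ciInf fun w => hmin w w.2) ?_)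
  exact ciInf_le ⟨0, Set.forall_mem_range.2 fun _ => norm_nonneg _⟩ (⟨q, hq⟩ : K)

theorem mem_orthogonal_of_mem_polarCone {K : Set E} {L : Submodule ℝ E} (hLK : (L : Set E) ⊆ K)
    {u : E} (hu : u ∈ polarCone K) : u ∈ Lᗮ := by
  refine (Submodule.mem_orthogonal' L u).2 fun l hl => le_antisymm (hu l (hLK hl)) ?_
  simpa only [inner_neg_right, Left.neg_nonpos_iff] using hu (-l) (hLK (neg_mem hl))

theorem mem_polarCone_add_ball_iff {K : Set E} {x k : E} (hk : k ∈ K)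
    (hxk : x - k ∈ polarCone K) (hxk0 : ⟪x - k, k⟫ = 0) (r : ℝ) :
    x ∈ polarCone K + ball 0 r ↔ ‖k‖ < r := by
  constructor
  · rintro ⟨s, hs, b, hb, rfl⟩
    rw [mem_ball_zero_iff] at hb
    have hbk : ‖k‖ ^ 2 ≤ ⟪b, k⟫ := by
      have hsk := hs k hk
      have : ⟪b, k⟫ = ⟪s + b - k, k⟫ + ‖k‖ ^ 2 - ⟪s, k⟫ := by
        rw [← real_inner_self_eq_norm_sq, ← inner_add_left, ← inner_sub_left]
        congr 1; abel
      linarith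
    refine lt_of_le_of_lt (le_of_not_gt fun hlt => ?_) hb
    have := mul_lt_mul_of_pos_right hlt ((norm_nonneg b).trans_lt hlt)
    nlinarith [real_inner_le_norm b k]
  · exact fun hk => ⟨x - k, hxk, k, mem_ball_zero_iff.2 hk, sub_add_cancel x k⟩

section ConvexCone

variable {K : Set E} (hKconv : Convex ℝ K) (hKcone : ∀ c ∈ K, ∀ t : ℝ, 0 ≤ t → t • c ∈ K)
include hKconv hKcone

theorem add_mem_of_convex_of_smul_mem {a b : E} (ha : a ∈ K) (hb : b ∈ K) : a + b ∈ K := by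
  convert hKcone _ (hKconv ha hb (by norm_num : (0 : ℝ) ≤ 1 / 2) (by norm_num : (0 : ℝ) ≤ 1 / 2)
    (by norm_num)) 2 (by norm_num) using 1
  rw [smul_add, smul_smul, smul_smul]
  norm_num

theorem sub_mem_polarCone_of_forall_norm_le {x q : E} (hq : q ∈ K)
    (hmin : ∀ y ∈ K, ‖x - q‖ ≤ ‖x - y‖) : x - q ∈ polarCone K ∧ ⟪x - q, q⟫ = 0 := by
  have hvi := real_inner_sub_le_zero_of_forall_norm_le hKconv hq hmin
  have hle : ⟪x - q, q⟫ ≤ 0 := by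
    simpa only [two_smul, add_sub_cancel_right] using hvi (2 • q) (hKcone q hq 2 zero_le_two)
  have hge : 0 ≤ ⟪x - q, q⟫ := by
    simpa only [zero_sub, inner_neg_right, Left.neg_nonpos_iff] using
      hvi 0 (by simpa only [zero_smul] using hKcone q hq 0 le_rfl)
  have hq0 := le_antisymm hle hge
  refine ⟨fun w hw => ?_, hq0⟩
  simpa only [inner_sub_right, hq0, sub_zero] using hvi w hw

end ConvexCone

section SubspaceInCone

variable {L : Submodule ℝ E} {C : Set E} {x p q : E}

theorem sub_mem_inter_orthogonal (hCconv : Convex ℝ C)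
    (hCcone : ∀ c ∈ C, ∀ t : ℝ, 0 ≤ t → t • c ∈ C) (hLC : (L : Set E) ⊆ C) (hp : p ∈ L)
    (hq : q ∈ C) (hxpL : x - p ∈ Lᗮ) (hxqL : x - q ∈ Lᗮ) : q - p ∈ C ∩ (Lᗮ : Set E) := by
  refine ⟨?_, ?_⟩
  · rw [sub_eq_add_neg]
    exact add_mem_of_convex_of_smul_mem hCconv hCcone hq (hLC (neg_mem hp))
  · simpa only [SetLike.mem_coe, sub_sub_sub_cancel_left] using sub_mem hxpL hxqL

theorem sub_mem_polarCone_inter_orthogonal (hp : p ∈ L) (hxqC : x - q ∈ polarCone C) :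
    x - (q - p) ∈ polarCone (C ∩ (Lᗮ : Set E)) := by
  rintro v ⟨hvC, hvL⟩
  rw [sub_sub_eq_add_sub, add_sub_right_comm, inner_add_left,
    Submodule.inner_right_of_mem_orthogonal hp hvL, add_zero]
  exact hxqC v hvC

end SubspaceInCone

end PolarCone

theorem stmt5_general {E : Type*} [NormedAddCommGroup E] [InnerProductSpace ℝ E]
    (L : Submodule ℝ E)
    (C : Set E) (hCconv : Convex ℝ C)
    (hCcone : ∀ c ∈ C, ∀ r : ℝ, 0 ≤ r → r • c ∈ C)
    (hLC : (L : Set E) ⊆ C)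
    (PL PC : E → E)
    (hPL : ∀ x : E, PL x ∈ L ∧ ∀ y ∈ (L : Set E), ‖x - PL x‖ ≤ ‖x - y‖)
    (hPC : ∀ x : E, PC x ∈ C ∧ ∀ y ∈ C, ‖x - PC x‖ ≤ ‖x - y‖)
    (r : ℝ) (hr : 0 < r) :
    {x : E | ‖x - PL x‖ ^ 2 - ‖x - PC x‖ ^ 2 < r ^ 2} =
      {u : E | ∀ v ∈ C ∩ (Lᗮ : Set E), (inner ℝ u v : ℝ) ≤ 0} + Metric.ball (0 : E) r := by
  ext x
  obtain ⟨hp, hpmin⟩ := hPL x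
  obtain ⟨hq, hqmin⟩ := hPC x
  have hxpL : x - PL x ∈ Lᗮ := mem_orthogonal_of_mem_polarCone subset_rfl
    (sub_mem_polarCone_of_forall_norm_le L.convex (fun c hc t _ => L.smul_mem t hc) hp hpmin).1
  obtain ⟨hxqC, hxq0⟩ := sub_mem_polarCone_of_forall_norm_le hCconv hCcone hq hqmin
  have hxqL := mem_orthogonal_of_mem_polarCone hLC hxqC
  have hk := sub_mem_inter_orthogonal hCconv hCcone hLC hp hq hxpL hxqL
  have hxq_k : ⟪x - PC x, PC x - PL x⟫ = 0 := by
    rw [inner_sub_right, hxq0, Submodule.inner_left_of_mem_orthogonal hp hxqL, sub_zero]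
  have hxk0 : ⟪x - (PC x - PL x), PC x - PL x⟫ = 0 := by
    rw [sub_sub_eq_add_sub, add_sub_right_comm, inner_add_left, hxq_k,
      Submodule.inner_right_of_mem_orthogonal hp hk.2, add_zero]
  have hpyth : ‖x - PL x‖ ^ 2 = ‖x - PC x‖ ^ 2 + ‖PC x - PL x‖ ^ 2 := by
    rw [← sub_add_sub_cancel x (PC x) (PL x), norm_add_sq_real, hxq_k]
    ring
  rw [Set.mem_ofPred_eq, hpyth, add_sub_cancel_left, sq_lt_sq₀ (norm_nonneg _) hr.le]
  exact (mem_polarCone_add_ball_iff hk (sub_mem_polarCone_inter_orthogonal hp hxqC) hxk0 r).symm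

/-- Let E be a real Hilbert space, L a closed linear subspace, C a nonempty
closed convex cone with L ⊆ C, and r > 0. Then
{x : ‖x − P_L(x)‖² − ‖x − P_C(x)‖² < r²} = (C ∩ L⊥)° ⊕ Ball(0, r), where (C ∩ L⊥)° is
the polar cone of C ∩ L⊥. -/
theorem stmt5 {E : Type*} [NormedAddCommGroup E] [InnerProductSpace ℝ E] [CompleteSpace E]
    (L : Submodule ℝ E) (hLclosed : IsClosed (L : Set E))
    (C : Set E) (hCne : C.Nonempty) (hCclosed : IsClosed C) (hCconv : Convex ℝ C)
    (hCcone : ∀ c ∈ C, ∀ r : ℝ, 0 ≤ r → r • c ∈ C)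
    (hLC : (L : Set E) ⊆ C)
    (PL PC : E → E)
    (hPL : ∀ x : E, PL x ∈ L ∧ ∀ y ∈ (L : Set E), ‖x - PL x‖ ≤ ‖x - y‖)
    (hPC : ∀ x : E, PC x ∈ C ∧ ∀ y ∈ C, ‖x - PC x‖ ≤ ‖x - y‖)
    (r : ℝ) (hr : 0 < r) :
    {x : E | ‖x - PL x‖ ^ 2 - ‖x - PC x‖ ^ 2 < r ^ 2} =
      {u : E | ∀ v ∈ C ∩ (Lᗮ : Set E), (inner ℝ u v : ℝ) ≤ 0} + Metric.ball (0 : E) r :=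
  stmt5_general L C hCconv hCcone hLC PL PC hPL hPC r hr
end
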